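/- arXiv:2405.09778 — 2 statements merged into one kernel-verified Lean document; each statement's English description precedes it below -/
import Mathlib

section
/- Let N_r and W be positive integers. For natural numbers r and b, let N(r, b) denote the number of r-element subsets S of (Fin N_r) × (Fin W) whose image under the first projection has exactly b elements (i.e., S occupies exactly b rows). Then for all r ≥ 1 and b ≥ 1 with r ≤ N_r·W, the recursion r · N(r, b) = W · (N_r − b + 1) · N(r − 1, b − 1) + (b·W − (r − 1)) · N(r − 1, b) holds. -/
open Finset

/-- `rowCount Nr W r b` is the number of `r`-element subsets of the grid
`Fin Nr × Fin W` occupying exactly `b` distinct rows (first coordinates). -/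
def rowCount (Nr W r b : ℕ) : ℕ :=
  (((Finset.univ : Finset (Fin Nr × Fin W)).powersetCard r).filter
    (fun S => (S.image Prod.fst).card = b)).card

lemma card_pairs {α β : Type*} [DecidableEq α] [DecidableEq β] [Fintype β]
    (C : Finset α) (f : α → Finset β) (k : ℕ) (hk : ∀ S ∈ C, (f S).card = k) :
    ((C ×ˢ (Finset.univ : Finset β)).filter (fun p => p.2 ∈ f p.1)).card = C.card * k := by
  have h : (C ×ˢ (Finset.univ : Finset β)).filter (fun p => p.2 ∈ f p.1)
      = C.biUnion (fun S => {S} ×ˢ f S) := by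
    ext p
    simp only [mem_filter, mem_product, mem_biUnion, mem_singleton, mem_univ, true_and, and_true]
    constructor
    · rintro ⟨h1, h2⟩; exact ⟨p.1, h1, rfl, h2⟩
    · rintro ⟨a, ha, rfl, h2⟩; exact ⟨ha, h2⟩
  rw [h, card_biUnion]
  · rw [Finset.sum_congr rfl (fun S hS => by
      rw [card_product, card_singleton, one_mul, hk S hS]), sum_const, smul_eq_mul]
  · intro a ha b hb hab
    simp only [disjoint_left, mem_product, mem_singleton]
    rintro p ⟨rfl, -⟩ ⟨rfl, -⟩
    exact hab rfl

lemma key (Nr W r b : ℕ) (hr : 1 ≤ r) (hb : 1 ≤ b) :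
    r * rowCount Nr W r b =
      ((Nr - (b - 1)) * W) * rowCount Nr W (r - 1) (b - 1)
        + (b * W - (r - 1)) * rowCount Nr W (r - 1) b := by
  classical
  have _dummy : True := trivial
  set A : Finset (Finset (Fin Nr × Fin W)) :=
    ((Finset.univ : Finset (Fin Nr × Fin W)).powersetCard r).filter
      (fun S => (S.image Prod.fst).card = b) with hA
  set B1 : Finset (Finset (Fin Nr × Fin W)) :=
    ((Finset.univ : Finset (Fin Nr × Fin W)).powersetCard (r - 1)).filter
      (fun S => (S.image Prod.fst).card = b - 1) with hB1
  set B2 : Finset (Finset (Fin Nr × Fin W)) :=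
    ((Finset.univ : Finset (Fin Nr × Fin W)).powersetCard (r - 1)).filter
      (fun S => (S.image Prod.fst).card = b) with hB2
  -- pair sets
  set P : Finset (Finset (Fin Nr × Fin W) × (Fin Nr × Fin W)) :=
    (A ×ˢ Finset.univ).filter (fun p => p.2 ∈ p.1) with hP
  set Q1 : Finset (Finset (Fin Nr × Fin W) × (Fin Nr × Fin W)) :=
    (B1 ×ˢ Finset.univ).filter
      (fun p => p.2 ∈ Finset.univ.filter (fun x : Fin Nr × Fin W => x.1 ∉ p.1.image Prod.fst)) with hQ1
  set Q2 : Finset (Finset (Fin Nr × Fin W) × (Fin Nr × Fin W)) :=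
    (B2 ×ˢ Finset.univ).filter
      (fun p => p.2 ∈ ((p.1.image Prod.fst) ×ˢ Finset.univ) \ p.1) with hQ2
  have cardP : P.card = A.card * r := by
    rw [hP]
    exact card_pairs A (fun S => S) r (fun S hS => (mem_powersetCard.1 (mem_filter.1 hS).1).2)
  have cardQ1 : Q1.card = B1.card * ((Nr - (b - 1)) * W) := by
    rw [hQ1]
    refine card_pairs B1 (fun S => Finset.univ.filter (fun x : Fin Nr × Fin W => x.1 ∉ S.image Prod.fst)) _ (fun S hS => ?_)
    have hrows : (S.image Prod.fst).card = b - 1 := (mem_filter.1 hS).2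
    have : (Finset.univ.filter (fun x : Fin Nr × Fin W => x.1 ∉ S.image Prod.fst))
        = ((S.image Prod.fst)ᶜ ×ˢ Finset.univ) := by
      ext x
      simp [mem_product]
    show (Finset.univ.filter (fun x : Fin Nr × Fin W => x.1 ∉ S.image Prod.fst)).card = _
    rw [this, card_product, card_compl, hrows]
    simp [Fintype.card_fin]
  have cardQ2 : Q2.card = B2.card * (b * W - (r - 1)) := by
    rw [hQ2]
    refine card_pairs B2 (fun S => ((S.image Prod.fst) ×ˢ Finset.univ) \ S) _ (fun S hS => ?_)
    have hcard : S.card = r - 1 := (mem_powersetCard.1 (mem_filter.1 hS).1).2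
    have hrows : (S.image Prod.fst).card = b := (mem_filter.1 hS).2
    have hsub : S ⊆ (S.image Prod.fst) ×ˢ Finset.univ := by
      intro x hx
      simp only [mem_product, mem_univ, and_true]
      exact mem_image_of_mem Prod.fst hx
    show (((S.image Prod.fst) ×ˢ Finset.univ) \ S).card = _
    rw [card_sdiff_of_subset hsub, card_product, hrows, hcard]
    simp [Fintype.card_fin]
  -- disjointness of Q1 and Q2
  have hdisj : Disjoint Q1 Q2 := by
    rw [disjoint_left]
    intro p h1 h2
    have e1 : (p.1.image Prod.fst).card = b - 1 :=
      (mem_filter.1 (mem_product.1 (mem_filter.1 h1).1).1).2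
    have e2 : (p.1.image Prod.fst).card = b :=
      (mem_filter.1 (mem_product.1 (mem_filter.1 h2).1).1).2
    omega
  -- the bijection
  have cardPQ : P.card = (Q1 ∪ Q2).card := by
    apply card_nbij' (fun p => (p.1.erase p.2, p.2)) (fun p => (insert p.2 p.1, p.2))
    · -- forward maps to
      rintro ⟨S, x⟩ hp
      rw [Finset.mem_coe, hP, mem_filter] at hp
      obtain ⟨hprod, hxS⟩ := hp
      have hSA : S ∈ A := (mem_product.1 hprod).1
      rw [hA, mem_filter] at hSA
      have hScard : S.card = r := (mem_powersetCard.1 hSA.1).2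
      have hSrows : (S.image Prod.fst).card = b := hSA.2
      have hxS' : x ∈ S := hxS
      have hecard : (S.erase x).card = r - 1 := by rw [card_erase_of_mem hxS', hScard]
      have hins : insert x (S.erase x) = S := insert_erase hxS'
      have himg : S.image Prod.fst = insert x.1 ((S.erase x).image Prod.fst) := by
        conv_lhs => rw [← hins]
        rw [image_insert]
      by_cases hx1 : x.1 ∈ (S.erase x).image Prod.fst
      · -- Q2 case
        refine mem_union_right _ ?_
        have heq : (S.erase x).image Prod.fst = S.image Prod.fst := by
          rw [himg, insert_eq_self.2 hx1]
        rw [hQ2, mem_filter]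
        refine ⟨mem_product.2 ⟨?_, mem_univ _⟩, ?_⟩
        · rw [hB2, mem_filter]
          exact ⟨mem_powersetCard.2 ⟨subset_univ _, hecard⟩, by rw [heq, hSrows]⟩
        · exact mem_sdiff.2 ⟨mem_product.2 ⟨hx1, mem_univ _⟩, notMem_erase x S⟩
      · -- Q1 case
        refine mem_union_left _ ?_
        have hrowse : ((S.erase x).image Prod.fst).card = b - 1 := by
          have : (S.image Prod.fst).card = ((S.erase x).image Prod.fst).card + 1 := by
            rw [himg, card_insert_of_notMem hx1]
          omega
        rw [hQ1, mem_filter]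
        refine ⟨mem_product.2 ⟨?_, mem_univ _⟩, ?_⟩
        · rw [hB1, mem_filter]
          exact ⟨mem_powersetCard.2 ⟨subset_univ _, hecard⟩, hrowse⟩
        · exact mem_filter.2 ⟨mem_univ _, hx1⟩
    · -- backward maps to
      rintro ⟨S, x⟩ hp
      rcases mem_union.1 hp with h | h
      · rw [hQ1, mem_filter] at h
        obtain ⟨hprod, hcond⟩ := h
        have hB : S ∈ B1 := (mem_product.1 hprod).1
        rw [hB1, mem_filter] at hB
        have hx1 : x.1 ∉ S.image Prod.fst := (mem_filter.1 hcond).2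
        have hScard : S.card = r - 1 := (mem_powersetCard.1 hB.1).2
        have hSrows : (S.image Prod.fst).card = b - 1 := hB.2
        have hxS : x ∉ S := fun hxS => hx1 (mem_image_of_mem Prod.fst hxS)
        rw [Finset.mem_coe, hP, mem_filter]
        refine ⟨mem_product.2 ⟨?_, mem_univ _⟩, mem_insert_self x S⟩
        rw [hA, mem_filter]
        refine ⟨mem_powersetCard.2 ⟨subset_univ _, ?_⟩, ?_⟩
        · rw [card_insert_of_notMem hxS, hScard]; omega
        · rw [image_insert, card_insert_of_notMem hx1, hSrows]; omega
      · rw [hQ2, mem_filter] at h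
        obtain ⟨hprod, hcond⟩ := h
        have hB : S ∈ B2 := (mem_product.1 hprod).1
        rw [hB2, mem_filter] at hB
        have hcond' := mem_sdiff.1 hcond
        have hx1 : x.1 ∈ S.image Prod.fst := (mem_product.1 hcond'.1).1
        have hxS : x ∉ S := hcond'.2
        have hScard : S.card = r - 1 := (mem_powersetCard.1 hB.1).2
        have hSrows : (S.image Prod.fst).card = b := hB.2
        rw [Finset.mem_coe, hP, mem_filter]
        refine ⟨mem_product.2 ⟨?_, mem_univ _⟩, mem_insert_self x S⟩
        rw [hA, mem_filter]
        refine ⟨mem_powersetCard.2 ⟨subset_univ _, ?_⟩, ?_⟩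
        · rw [card_insert_of_notMem hxS, hScard]; omega
        · rw [image_insert, insert_eq_self.2 hx1, hSrows]
    · -- left inverse
      rintro ⟨S, x⟩ hp
      rw [Finset.mem_coe, hP, mem_filter] at hp
      have hxS : x ∈ S := hp.2
      show (insert x (S.erase x), x) = (S, x)
      rw [insert_erase hxS]
    · -- right inverse
      rintro ⟨S, x⟩ hp
      have hxS : x ∉ S := by
        rcases mem_union.1 hp with h | h
        · rw [hQ1, mem_filter] at h
          have hx1 : x.1 ∉ S.image Prod.fst := (mem_filter.1 h.2).2
          exact fun hxS => hx1 (mem_image_of_mem Prod.fst hxS)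
        · rw [hQ2, mem_filter] at h
          exact (mem_sdiff.1 h.2).2
      show ((insert x S).erase x, x) = (S, x)
      rw [erase_insert hxS]
  -- assemble
  have : A.card * r = B1.card * ((Nr - (b - 1)) * W) + B2.card * (b * W - (r - 1)) := by
    rw [← cardP, ← cardQ1, ← cardQ2, cardPQ, card_union_of_disjoint hdisj]
  have hA' : rowCount Nr W r b = A.card := rfl
  have hB1' : rowCount Nr W (r - 1) (b - 1) = B1.card := rfl
  have hB2' : rowCount Nr W (r - 1) b = B2.card := rfl
  rw [hA', hB1', hB2', mul_comm r, this]
  ring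

lemma rowCount_zero_of_lt (Nr W r b : ℕ) (h : Nr < b) : rowCount Nr W r b = 0 := by
  rw [rowCount, Finset.card_eq_zero, Finset.filter_eq_empty_iff]
  intro S _
  have h2 : (S.image Prod.fst).card ≤ Nr := by
    have := card_le_card (subset_univ (S.image Prod.fst))
    simpa using this
  omega

lemma rowCount_zero_of_gt (Nr W r b : ℕ) (h : b * W < r) : rowCount Nr W r b = 0 := by
  rw [rowCount, Finset.card_eq_zero, Finset.filter_eq_empty_iff]
  intro S hS hSb
  have hScard : S.card = r := (mem_powersetCard.1 hS).2
  have hsub : S ⊆ (S.image Prod.fst) ×ˢ Finset.univ := by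
    intro x hx
    simp only [mem_product, mem_univ, and_true]
    exact mem_image_of_mem Prod.fst hx
  have := card_le_card hsub
  rw [card_product, hScard, hSb] at this
  simp only [card_univ, Fintype.card_fin] at this
  omega

/-- The counting recursion behind Eq. (43):
`r · N(r,b) = W(N_r − b + 1) · N(r−1, b−1) + (bW − (r−1)) · N(r−1, b)`. -/
theorem stmt_7 (Nr W : ℕ) (hNr : 0 < Nr) (hW : 0 < W)
    (r b : ℕ) (hr : 1 ≤ r) (hb : 1 ≤ b) (hrW : r ≤ Nr * W) :
    (r : ℤ) * rowCount Nr W r b =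
      (W : ℤ) * ((Nr : ℤ) - b + 1) * rowCount Nr W (r - 1) (b - 1) +
        ((b : ℤ) * W - ((r : ℤ) - 1)) * rowCount Nr W (r - 1) b := by
  have hkey := key Nr W r b hr hb
  by_cases hbNr : b ≤ Nr + 1
  · by_cases hrbW : r - 1 ≤ b * W
    · zify [show b - 1 ≤ Nr by omega, hrbW, hb, hr] at hkey
      linear_combination hkey
    · have h2 : rowCount Nr W (r - 1) b = 0 :=
        rowCount_zero_of_gt Nr W (r - 1) b (by omega)
      rw [h2] at hkey ⊢
      zify [show b - 1 ≤ Nr by omega, hb] at hkey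
      push_cast
      linear_combination hkey
  · have h0 : rowCount Nr W r b = 0 := rowCount_zero_of_lt Nr W r b (by omega)
    have h1 : rowCount Nr W (r - 1) (b - 1) = 0 :=
      rowCount_zero_of_lt Nr W (r - 1) (b - 1) (by omega)
    have h2 : rowCount Nr W (r - 1) b = 0 := rowCount_zero_of_lt Nr W (r - 1) b (by omega)
    rw [h0, h1, h2]
    push_cast
    ring
end

section
/- Let n be a positive integer, q a natural number, and m : Fin n → ℝ strictly positive, with tail sums n_j = ∑_{i ≥ j} m_i. Then the integral of the function γ ↦ (1 − e^{−γ_0})^q · exp(−∑_i m_i γ_i) over the ordered region { γ ∈ (Fin n → ℝ) : 0 ≤ γ_0 ≤ γ_1 ≤ ⋯ ≤ γ_{n−1} } (with respect to n-dimensional Lebesgue measure) equals ( q! / ∏_{j=0}^{q} (n_0 + j) ) / ∏_{j=1}^{n−1} n_j, i.e., B(n_0, q+1) divided by the product of the tail sums n_1, …, n_{n−1}, where B denotes the Beta function. -/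
open MeasureTheory Real Set

section OneD

lemma intExp {a : ℝ} (ha : 0 < a) : ∫ x in Ioi (0:ℝ), Real.exp (-(a*x)) = a⁻¹ := by
  have := integral_comp_mul_left_Ioi (fun x => Real.exp (-x)) 0 ha
  rw [this]
  simp [abs_of_pos (inv_pos.2 ha), integral_exp_neg_Ioi, integral_exp_Iic_zero]

lemma aInt (q : ℕ) {a : ℝ} (ha : 0 < a) :
    IntegrableOn (fun t => (1 - Real.exp (-t))^q * Real.exp (-(a*t))) (Ioi (0:ℝ)) := by
  refine Integrable.mono (g := fun t => Real.exp (-a*t)) (exp_neg_integrableOn_Ioi 0 ha)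
    ?_ ?_
  · exact (Continuous.mul (by continuity) (by continuity)).aestronglyMeasurable
  · filter_upwards [ae_restrict_mem measurableSet_Ioi] with t ht
    have h1 : 0 ≤ 1 - Real.exp (-t) := by
      have : Real.exp (-t) ≤ 1 := Real.exp_le_one_iff.2 (by linarith [le_of_lt (Set.mem_Ioi.mp ht)])
      linarith
    have h2 : 1 - Real.exp (-t) ≤ 1 := by nlinarith [Real.exp_pos (-t)]
    rw [norm_mul, norm_pow, Real.norm_eq_abs, Real.norm_eq_abs, abs_of_nonneg h1,
      abs_of_pos (Real.exp_pos _), Real.norm_eq_abs, abs_of_pos (Real.exp_pos _), neg_mul]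
    nlinarith [pow_le_one₀ (n := q) h1 h2, Real.exp_pos (-(a*t)), pow_nonneg h1 q]

lemma aVal (q : ℕ) : ∀ {a : ℝ}, 0 < a →
    ∫ t in Ioi (0:ℝ), (1 - Real.exp (-t))^q * Real.exp (-(a*t)) =
      (q.factorial : ℝ) / ∏ j ∈ Finset.range (q+1), (a + j) := by
  induction q with
  | zero =>
    intro a ha
    simp only [pow_zero, one_mul]
    rw [intExp ha]
    rw [Finset.prod_range_one]
    norm_num
  | succ q ih =>
    intro a ha
    have key : ∀ t : ℝ, (1 - Real.exp (-t))^(q+1) * Real.exp (-(a*t)) =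
        (1 - Real.exp (-t))^q * Real.exp (-(a*t)) -
        (1 - Real.exp (-t))^q * Real.exp (-((a+1)*t)) := by
      intro t
      have : Real.exp (-((a+1)*t)) = Real.exp (-(a*t)) * Real.exp (-t) := by
        rw [← Real.exp_add]; ring_nf
      rw [this, pow_succ]; ring
    simp_rw [key]
    rw [integral_sub (aInt q ha) (aInt q (by linarith)), ih ha, ih (by linarith : (0:ℝ) < a+1)]
    have hM : ∀ j ∈ Finset.range q, (0:ℝ) < a + (j+1) := by
      intro j _; positivity
    set M := ∏ j ∈ Finset.range q, (a + (j+1)) with hMdef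
    have hMpos : 0 < M := Finset.prod_pos hM
    have e1 : ∏ j ∈ Finset.range (q+1), (a + j) = a * M := by
      rw [Finset.prod_range_succ']
      have h0 : a + ((0:ℕ):ℝ) = a := by norm_num
      rw [h0, mul_comm]
      congr 1
      exact Finset.prod_congr rfl (by intro j _; push_cast; ring)
    have e2 : ∏ j ∈ Finset.range (q+1), ((a+1) + j) = M * (a + q + 1) := by
      rw [Finset.prod_range_succ]
      congr 1
      · exact Finset.prod_congr rfl (by intro j _; push_cast; ring)
      · push_cast; ring
    have e3 : ∏ j ∈ Finset.range (q+2), (a + j) = a * M * (a + q + 1) := by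
      rw [Finset.prod_range_succ, e1]
      push_cast; ring
    rw [e1, e2, e3]
    have hfac : ((q+1).factorial : ℝ) = (q+1) * q.factorial := by
      rw [Nat.factorial_succ]; push_cast; ring
    rw [hfac]
    field_simp
    ring

lemma aValL (q : ℕ) {a : ℝ} (ha : 0 < a) :
    ∫⁻ t in Ioi (0:ℝ), ENNReal.ofReal ((1 - Real.exp (-t))^q * Real.exp (-(a*t))) =
      ENNReal.ofReal ((q.factorial : ℝ) / ∏ j ∈ Finset.range (q+1), (a + j)) := by
  rw [← ofReal_integral_eq_lintegral_ofReal (aInt q ha) ?_, aVal q ha]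
  filter_upwards [ae_restrict_mem measurableSet_Ioi] with t ht
  have h1 : 0 ≤ 1 - Real.exp (-t) := by
    have : Real.exp (-t) ≤ 1 := Real.exp_le_one_iff.2 (by linarith [le_of_lt (Set.mem_Ioi.mp ht)])
    linarith
  positivity

lemma expL {a : ℝ} (ha : 0 < a) :
    ∫⁻ t in Ioi (0:ℝ), ENNReal.ofReal (Real.exp (-(a*t))) = ENNReal.ofReal a⁻¹ := by
  have := aValL 0 ha
  simp only [pow_zero, one_mul, Finset.prod_range_one, Nat.factorial_zero, Nat.cast_one,
    Nat.cast_zero, add_zero] at this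
  rw [this]
  norm_num

end OneD

section MultiD

lemma measS (k : ℕ) : MeasurableSet {γ : Fin k → ℝ | (∀ i, 0 ≤ γ i) ∧ Monotone γ} := by
  have h1 : MeasurableSet {γ : Fin k → ℝ | ∀ i, 0 ≤ γ i} := by
    rw [Set.setOf_forall]
    exact MeasurableSet.iInter fun i => measurableSet_le measurable_const (measurable_pi_apply i)
  have h2 : MeasurableSet {γ : Fin k → ℝ | Monotone γ} := by
    have : {γ : Fin k → ℝ | Monotone γ} =
        ⋂ i : Fin k, ⋂ j : Fin k, ⋂ _ : i ≤ j, {γ : Fin k → ℝ | γ i ≤ γ j} := by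
      ext γ
      simp only [Set.mem_iInter, Set.mem_setOf_eq]
      exact ⟨fun h i j hij => h hij, fun h i j hij => h i j hij⟩
    rw [this]
    exact MeasurableSet.iInter fun i => MeasurableSet.iInter fun j => MeasurableSet.iInter
      fun _ => measurableSet_le (measurable_pi_apply i) (measurable_pi_apply j)
  rw [show {γ : Fin k → ℝ | (∀ i, 0 ≤ γ i) ∧ Monotone γ} =
    {γ : Fin k → ℝ | ∀ i, 0 ≤ γ i} ∩ {γ : Fin k → ℝ | Monotone γ} from rfl]
  exact h1.inter h2

lemma monotone_cons_iff {k : ℕ} {x : ℝ} {z : Fin k → ℝ} :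
    Monotone (Fin.cons x z : Fin (k+1) → ℝ) ↔ (∀ i, x ≤ z i) ∧ Monotone z := by
  constructor
  · intro h
    refine ⟨fun i => ?_, fun i j hij => ?_⟩
    · simpa using h (Fin.zero_le i.succ)
    · simpa using h (Fin.succ_le_succ_iff.mpr hij)
  · rintro ⟨h1, h2⟩ i j hij
    rcases Fin.eq_zero_or_eq_succ i with rfl | ⟨i', rfl⟩
    · rcases Fin.eq_zero_or_eq_succ j with rfl | ⟨j', rfl⟩
      · exact le_refl _
      · simpa using h1 j'
    · rcases Fin.eq_zero_or_eq_succ j with rfl | ⟨j', rfl⟩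
      · exact absurd (le_antisymm hij (Fin.zero_le _)) (Fin.succ_ne_zero _)
      · simpa using h2 (Fin.succ_le_succ_iff.mp hij)

lemma peel (k : ℕ) (m : Fin (k+1) → ℝ) (g : ℝ → ENNReal) (hg : Measurable g) (C : ENNReal)
    (hC : ∫⁻ y in {y : Fin k → ℝ | (∀ i, 0 ≤ y i) ∧ Monotone y},
        ENNReal.ofReal (Real.exp (-∑ i, m i.succ * y i)) = C) :
    ∫⁻ γ in {γ : Fin (k+1) → ℝ | (∀ i, 0 ≤ γ i) ∧ Monotone γ},
        g (γ 0) * ENNReal.ofReal (Real.exp (-∑ i, m i * γ i)) =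
      (∫⁻ x in Ioi (0:ℝ), g x * ENNReal.ofReal (Real.exp (-((∑ i, m i) * x)))) * C := by
  set S : Set (Fin (k+1) → ℝ) := {γ | (∀ i, 0 ≤ γ i) ∧ Monotone γ} with hS
  set T : Set (Fin k → ℝ) := {y | (∀ i, 0 ≤ y i) ∧ Monotone y} with hT
  set f : (Fin (k+1) → ℝ) → ENNReal :=
    fun γ => g (γ 0) * ENNReal.ofReal (Real.exp (-∑ i, m i * γ i)) with hf
  have hfmeas : Measurable f := by
    apply Measurable.mul (hg.comp (measurable_pi_apply 0))
    apply Measurable.ennreal_ofReal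
    exact (Continuous.rexp (Continuous.neg (continuous_finset_sum _
      fun i _ => (continuous_const.mul (continuous_apply i))))).measurable
  set F : (Fin (k+1) → ℝ) → ENNReal := S.indicator f with hF
  have hFmeas : Measurable F := hfmeas.indicator (measS (k+1))
  rw [← lintegral_indicator (measS (k+1)), ← hF]
  rw [volume_pi,
    ← MeasurePreserving.lintegral_comp_emb
      (MeasurePreserving.symm _ (measurePreserving_piFinSuccAbove (fun _ : Fin (k+1) => (volume : Measure ℝ)) 0))
      (MeasurableEquiv.measurableEmbedding _) F]
  have hcomp : AEMeasurable
      (fun a : ℝ × (Fin k → ℝ) => F ((MeasurableEquiv.piFinSuccAbove (fun _ : Fin (k+1) => ℝ) 0).symm a))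
      (volume.prod (Measure.pi fun _ => volume)) :=
    (hFmeas.comp (MeasurableEquiv.measurable _)).aemeasurable
  rw [lintegral_prod _ hcomp]
  have hsymm : ∀ p : ℝ × (Fin k → ℝ),
      (MeasurableEquiv.piFinSuccAbove (fun _ : Fin (k+1) => ℝ) 0).symm p = Fin.cons p.1 p.2 := by
    intro p
    simp [MeasurableEquiv.piFinSuccAbove_symm_apply, Fin.insertNthEquiv, Fin.insertNth_zero]
  simp_rw [hsymm]
  have hmem : ∀ (x : ℝ) (y : Fin k → ℝ),
      (Fin.cons x (y + fun _ => x) : Fin (k+1) → ℝ) ∈ S ↔ (x ∈ Ici (0:ℝ) ∧ y ∈ T) := by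
    intro x y
    simp only [hS, hT, Set.mem_setOf_eq, monotone_cons_iff, Set.mem_Ici]
    constructor
    · rintro ⟨hpos, hle, hmono⟩
      have hx : 0 ≤ x := by simpa using hpos 0
      refine ⟨hx, fun i => ?_, fun i j hij => ?_⟩
      · have := hle i; simp only [Pi.add_apply] at this; linarith
      · have := hmono hij; simp only [Pi.add_apply] at this; linarith
    · rintro ⟨hx, hy1, hy2⟩
      refine ⟨fun i => ?_, fun i => ?_, fun i j hij => ?_⟩
      · rcases Fin.eq_zero_or_eq_succ i with rfl | ⟨i', rfl⟩
        · simpa using hx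
        · simp only [Fin.cons_succ, Pi.add_apply]; have := hy1 i'; linarith
      · simp only [Pi.add_apply]; linarith [hy1 i]
      · simp only [Pi.add_apply]; exact (add_le_add_iff_right x).mpr (hy2 hij)
  have hsum : ∀ (x : ℝ) (y : Fin k → ℝ),
      ∑ i : Fin (k+1), m i * (Fin.cons x (y + fun _ => x) : Fin (k+1) → ℝ) i
        = (∑ i, m i) * x + ∑ i : Fin k, m i.succ * y i := by
    intro x y
    rw [Fin.sum_univ_succ]
    simp only [Fin.cons_zero, Fin.cons_succ, Pi.add_apply]
    rw [Fin.sum_univ_succ (f := fun i => m i)]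
    have : ∑ i : Fin k, m i.succ * (y i + x)
        = ∑ i : Fin k, m i.succ * y i + (∑ i : Fin k, m i.succ) * x := by
      rw [Finset.sum_mul, ← Finset.sum_add_distrib]
      exact Finset.sum_congr rfl fun i _ => by ring
    rw [this]; ring
  have key : ∀ (x : ℝ) (y : Fin k → ℝ), F (Fin.cons x (y + fun _ => x)) =
      (Set.indicator (Ici (0:ℝ))
        (fun x => g x * ENNReal.ofReal (Real.exp (-((∑ i, m i) * x)))) x) *
      (Set.indicator T (fun y => ENNReal.ofReal (Real.exp (-∑ i, m i.succ * y i))) y) := by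
    intro x y
    by_cases hx : x ∈ Ici (0:ℝ) <;> by_cases hy : y ∈ T
    · rw [hF, Set.indicator_of_mem ((hmem x y).mpr ⟨hx, hy⟩) f, Set.indicator_of_mem hx,
        Set.indicator_of_mem hy, hf]
      simp only [Fin.cons_zero, Pi.add_apply]
      rw [hsum x y, neg_add, Real.exp_add, ENNReal.ofReal_mul (by positivity)]
      ring
    · rw [hF, Set.indicator_of_notMem (fun h => hy ((hmem x y).mp h).2),
        Set.indicator_of_notMem hy, mul_zero]
    · rw [hF, Set.indicator_of_notMem (fun h => hx ((hmem x y).mp h).1),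
        Set.indicator_of_notMem hx, zero_mul]
    · rw [hF, Set.indicator_of_notMem (fun h => hx ((hmem x y).mp h).1),
        Set.indicator_of_notMem hx, zero_mul]
  have hTmeas : Measurable (fun y : Fin k → ℝ => ENNReal.ofReal (Real.exp (-∑ i, m i.succ * y i))) := by
    apply Measurable.ennreal_ofReal
    exact (Continuous.rexp (Continuous.neg (continuous_finset_sum _
      fun i _ => (continuous_const.mul (continuous_apply i))))).measurable
  have inner : ∀ x : ℝ, (∫⁻ y, F (Fin.cons x y) ∂(Measure.pi fun _ => volume)) =
      Set.indicator (Ici (0:ℝ))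
        (fun x => g x * ENNReal.ofReal (Real.exp (-((∑ i, m i) * x)))) x * C := by
    intro x
    rw [← volume_pi]
    rw [← lintegral_add_right_eq_self (fun y => F (Fin.cons x y)) (fun _ => x)]
    simp_rw [key x]
    rw [lintegral_const_mul _ (hTmeas.indicator (measS k))]
    rw [lintegral_indicator (measS k)]
    rw [← hT, hC]
  simp_rw [inner]
  rw [lintegral_mul_const (f := (Ici (0:ℝ)).indicator (fun x => g x * ENNReal.ofReal (rexp (-((∑ i, m i) * x))))) _ (Measurable.indicator
    (hg.mul (Measurable.ennreal_ofReal (by fun_prop))) measurableSet_Ici)]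
  rw [lintegral_indicator measurableSet_Ici]
  congr 1
  exact (setLIntegral_congr (Ioi_ae_eq_Ici (a := (0:ℝ)) (μ := (volume : Measure ℝ)))).symm

end MultiD

section Assemble

lemma filterSuccEq (k : ℕ) (j : Fin k) :
    (Finset.univ.filter (fun i : Fin (k+1) => j.succ ≤ i)) =
      (Finset.univ.filter (fun i : Fin k => j ≤ i)).map (Fin.succEmb k) := by
  ext i
  simp only [Finset.mem_filter, Finset.mem_univ, true_and, Finset.mem_map]
  constructor
  · intro h
    rcases Fin.eq_zero_or_eq_succ i with rfl | ⟨i', rfl⟩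
    · exact absurd (le_antisymm h (Fin.zero_le _)) (Fin.succ_ne_zero _)
    · exact ⟨i', Fin.succ_le_succ_iff.mp h, rfl⟩
  · rintro ⟨i', hi', rfl⟩
    exact Fin.succ_le_succ_iff.mpr hi'

lemma filterPosEq (k : ℕ) :
    (Finset.univ.filter (fun j : Fin (k+1) => 0 < j)) = Finset.univ.map (Fin.succEmb k) := by
  ext i
  simp only [Finset.mem_filter, Finset.mem_univ, true_and, Finset.mem_map]
  constructor
  · intro h
    rcases Fin.eq_zero_or_eq_succ i with rfl | ⟨i', rfl⟩
    · exact absurd rfl h.ne'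
    · exact ⟨i', rfl⟩
  · rintro ⟨i', _, rfl⟩
    exact Fin.succ_pos i'

lemma lemB : ∀ (k : ℕ) (m : Fin k → ℝ), (∀ i, 0 < m i) →
    ∫⁻ y in {y : Fin k → ℝ | (∀ i, 0 ≤ y i) ∧ Monotone y},
      ENNReal.ofReal (Real.exp (-∑ i, m i * y i)) =
    ∏ j : Fin k, ENNReal.ofReal ((∑ i ∈ Finset.univ.filter (fun i => j ≤ i), m i)⁻¹) := by
  intro k
  induction k with
  | zero =>
    intro m hm
    have hset : {y : Fin 0 → ℝ | (∀ i, 0 ≤ y i) ∧ Monotone y} = Set.univ := by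
      ext y
      simp only [Set.mem_setOf_eq, Set.mem_univ, iff_true]
      exact ⟨fun i => i.elim0, fun a => a.elim0⟩
    rw [hset]
    simp only [Finset.univ_eq_empty, Finset.sum_empty, neg_zero, Real.exp_zero,
      ENNReal.ofReal_one, Finset.prod_empty]
    rw [Measure.restrict_univ, lintegral_one, volume_pi, Measure.pi_univ]
    simp
  | succ k ih =>
    intro m hm
    have hpos : (0:ℝ) < ∑ i, m i :=
      Finset.sum_pos (fun i _ => hm i) ⟨0, Finset.mem_univ 0⟩
    have hpeel := peel k m (fun _ => 1) measurable_const _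
      (ih (fun i => m i.succ) (fun i => hm _))
    simp only [one_mul] at hpeel
    rw [hpeel, expL hpos, Fin.prod_univ_succ]
    congr 1
    · congr 2
      exact (Finset.sum_congr (Finset.filter_true_of_mem fun i _ => Fin.zero_le i)
        fun _ _ => rfl).symm
    · apply Finset.prod_congr rfl
      intro j _
      congr 2
      rw [filterSuccEq k j, Finset.sum_map]
      rfl

end Assemble


/-- Full integral evaluation of Appendix E (Eqs. (61)–(62)): over the ordered
region `0 ≤ γ₀ ≤ γ₁ ≤ ⋯ ≤ γ_{n−1}`,
`∫ (1 − e^{−γ₀})^q exp(−∑ mᵢ γᵢ) dγ = B(n₀, q+1) / ∏_{j≥1} nⱼ`, where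
`nⱼ = ∑_{i ≥ j} mᵢ` and `B(n₀, q+1) = q! / ∏_{j=0}^{q} (n₀ + j)`. -/
theorem stmt_11 (n : ℕ) (hn : 0 < n) (q : ℕ) (m : Fin n → ℝ) (hm : ∀ i, 0 < m i) :
    (∫ γ in {γ : Fin n → ℝ | 0 ≤ γ ⟨0, hn⟩ ∧ Monotone γ},
        (1 - Real.exp (-γ ⟨0, hn⟩)) ^ q * Real.exp (-∑ i, m i * γ i)) =
      ((q.factorial : ℝ) / ∏ j ∈ Finset.range (q + 1), ((∑ i, m i) + j)) /
        ∏ j ∈ Finset.univ.filter (fun j : Fin n => (⟨0, hn⟩ : Fin n) < j),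
          ∑ i ∈ Finset.univ.filter (fun i => j ≤ i), m i := by
  obtain ⟨k, rfl⟩ : ∃ k, n = k + 1 := ⟨n - 1, (Nat.succ_pred_eq_of_pos hn).symm⟩
  have h0 : (⟨0, hn⟩ : Fin (k+1)) = 0 := rfl
  simp only [h0]
  have hpos : (0:ℝ) < ∑ i, m i := Finset.sum_pos (fun i _ => hm i) ⟨0, Finset.mem_univ 0⟩
  have hSeq : {γ : Fin (k+1) → ℝ | 0 ≤ γ 0 ∧ Monotone γ} =
      {γ : Fin (k+1) → ℝ | (∀ i, 0 ≤ γ i) ∧ Monotone γ} := by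
    ext γ
    simp only [Set.mem_setOf_eq]
    exact ⟨fun h => ⟨fun i => le_trans h.1 (h.2 (Fin.zero_le i)), h.2⟩, fun h => ⟨h.1 0, h.2⟩⟩
  rw [hSeq]
  -- convert to lintegral
  rw [integral_eq_lintegral_of_nonneg_ae]
  rotate_left
  · filter_upwards [ae_restrict_mem (measS (k+1))] with γ hγ
    have hγ0 : (0:ℝ) ≤ γ 0 := hγ.1 0
    have h1 : (0:ℝ) ≤ 1 - Real.exp (-γ 0) := by
      have : Real.exp (-γ 0) ≤ 1 := Real.exp_le_one_iff.2 (by linarith)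
      linarith
    positivity
  · apply Continuous.aestronglyMeasurable
    apply Continuous.mul
    · exact Continuous.pow (continuous_const.sub (Continuous.rexp (continuous_apply 0).neg)) q
    · exact Continuous.rexp (Continuous.neg (continuous_finset_sum _
        fun i _ => continuous_const.mul (continuous_apply i)))
  -- split ofReal of product pointwise on the set
  rw [setLIntegral_congr_fun (measS (k+1)) (
      (@fun γ (hγ : (∀ i, 0 ≤ γ i) ∧ Monotone γ) => by
    have hγ0 : (0:ℝ) ≤ γ 0 := hγ.1 0
    have h1 : (0:ℝ) ≤ 1 - Real.exp (-γ 0) := by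
      have : Real.exp (-γ 0) ≤ 1 := Real.exp_le_one_iff.2 (by linarith)
      linarith
    show ENNReal.ofReal ((1 - Real.exp (-γ 0)) ^ q * Real.exp (-∑ i, m i * γ i)) =
      (fun x => ENNReal.ofReal ((1 - Real.exp (-x)) ^ q)) (γ 0) *
        ENNReal.ofReal (Real.exp (-∑ i, m i * γ i))
    rw [ENNReal.ofReal_mul (pow_nonneg h1 q)]))]
  have hgmeas : Measurable (fun x : ℝ => ENNReal.ofReal ((1 - Real.exp (-x)) ^ q)) := by
    apply Measurable.ennreal_ofReal
    exact (Continuous.pow (continuous_const.sub (Continuous.rexp continuous_id.neg)) q).measurable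
  rw [peel k m _ hgmeas _ (lemB k (fun i => m i.succ) (fun i => hm _))]
  have houter : (∫⁻ x in Ioi (0:ℝ), (fun x => ENNReal.ofReal ((1 - Real.exp (-x)) ^ q)) x *
      ENNReal.ofReal (Real.exp (-((∑ i, m i) * x)))) =
      ENNReal.ofReal ((q.factorial : ℝ) / ∏ j ∈ Finset.range (q+1), ((∑ i, m i) + j)) := by
    rw [← aValL q hpos]
    apply setLIntegral_congr_fun measurableSet_Ioi
    intro x hx
    have h1 : (0:ℝ) ≤ 1 - Real.exp (-x) := by
      have : Real.exp (-x) ≤ 1 := Real.exp_le_one_iff.2 (by simp at hx; linarith)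
      linarith
    exact (ENNReal.ofReal_mul (pow_nonneg h1 q)).symm
  rw [houter]
  -- take toReal
  rw [ENNReal.toReal_mul, ENNReal.toReal_ofReal, ENNReal.toReal_prod]
  · have hterm : ∀ j : Fin k, (ENNReal.ofReal
        ((∑ i ∈ Finset.univ.filter (fun i : Fin k => j ≤ i), m i.succ)⁻¹)).toReal =
        (∑ i ∈ Finset.univ.filter (fun i : Fin k => j ≤ i), m i.succ)⁻¹ := by
      intro j
      apply ENNReal.toReal_ofReal
      have : (0:ℝ) < ∑ i ∈ Finset.univ.filter (fun i : Fin k => j ≤ i), m i.succ :=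
        Finset.sum_pos (fun i _ => hm _) ⟨j, Finset.mem_filter.2 ⟨Finset.mem_univ _, le_refl _⟩⟩
      positivity
    rw [Finset.prod_congr rfl (fun j _ => hterm j), div_eq_mul_inv,
      filterPosEq k, Finset.prod_map, Finset.prod_inv_distrib]
    rw [div_eq_mul_inv]
    congr 1
    congr 1
    apply Finset.prod_congr rfl
    intro j _
    show (∑ i ∈ Finset.univ.filter (fun i : Fin k => j ≤ i), m i.succ)
      = ∑ i ∈ Finset.univ.filter (fun i : Fin (k+1) => (Fin.succEmb k) j ≤ i), m i
    rw [show ((Fin.succEmb k) j) = j.succ from rfl, filterSuccEq k j, Finset.sum_map]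
    rfl
  · have : (0:ℝ) < ∏ j ∈ Finset.range (q+1), ((∑ i, m i) + j) := by
      apply Finset.prod_pos
      intro j _
      positivity
    positivity
end
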